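/- For ℓ ∈ ½ℕ and integers 0 ≤ k ≤ m ≤ n ≤ 2ℓ, the sum ∑_{t=0}^{m} (-1)^t ((n-2ℓ)_{m-t}/(n+2)_{m-t}) ((2ℓ+2-t)_t/t!) (m+n+1-2t) R_k(λ(t); 0, 0, -m-1, -n-1) equals (-1)^{m+k} ((2ℓ+k+1)! (2ℓ-k)!/(2ℓ+1)!) · (n+1)/(m! (2ℓ-m)!). -/

import Mathlib

/-- Pochhammer symbol (rising factorial) `(a)_k`. -/
noncomputable def poch (a : ℝ) (k : ℕ) : ℝ := ∏ i ∈ Finset.range k, (a + i)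

/-- Racah polynomial `R_k(λ(t);0,0,-m-1,-n-1) = ₄F₃(-k, k+1, -t, t-m-n-1; 1, -m, -n; 1)`. -/
noncomputable def racah (k t m n : ℕ) : ℝ :=
  ∑ s ∈ Finset.range (k+1),
    poch (-(k:ℝ)) s * poch ((k:ℝ)+1) s * poch (-(t:ℝ)) s * poch ((t:ℝ)-m-n-1) s /
      (poch 1 s * poch (-(m:ℝ)) s * poch (-(n:ℝ)) s * (Nat.factorial s : ℝ))

open Finset Polynomial
open scoped Nat

/-!
After expanding the `₄F₃` and exchanging the two sums, the inner sum over `t` is a terminating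
well-poised sum that telescopes: its partial sums are the last term times a rational function of
the upper limit (Gosper's certificate), so it collapses to a single product. What remains is a
balanced `₃F₂` with parameters `-k, k + 1` over `1`, summed by Pfaff–Saalschütz: both sides are
polynomials of degree `k` in `y = L + 1`, and at `y = 0, …, k` only the term `s = y` survives.
-/

section Pochhammer

variable (a : ℝ) (k : ℕ)

@[simp]
lemma poch_zero : poch a 0 = 1 := prod_range_zero _

lemma poch_succ : poch a (k + 1) = poch a k * (a + k) := prod_range_succ _ _

lemma poch_succ' : poch a (k + 1) = a * poch (a + 1) k := by
  rw [poch, prod_range_succ', mul_comm, Nat.cast_zero, add_zero, poch]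
  exact congrArg _ (prod_congr rfl fun i _ => by push_cast; ring)

lemma poch_add (p q : ℕ) : poch a (p + q) = poch a p * poch (a + p) q := by
  simp only [poch, prod_range_add, Nat.cast_add, add_assoc]

lemma poch_mul_add : poch a k * (a + k) = a * poch (a + 1) k := by
  rw [← poch_succ, poch_succ']

lemma poch_one : poch 1 k = k ! := by
  induction k with
  | zero => simp
  | succ k ih => rw [poch_succ, ih, Nat.factorial_succ]; push_cast; ring

lemma poch_natCast_add_one_mul_factorial (j : ℕ) : poch (j + 1) k * j ! = (j + k)! := by
  rw [← poch_one, ← poch_one, poch_add, add_comm (1 : ℝ), mul_comm]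

lemma poch_neg_natCast_self : poch (-k) k = (-1) ^ k * k ! := by
  induction k with
  | zero => simp
  | succ k ih =>
    rw [poch_succ', Nat.cast_succ, neg_add, neg_add_cancel_right, ih, Nat.factorial_succ]
    push_cast; ring

variable {a k}

lemma poch_neg_natCast_eq_zero {M : ℕ} (h : M < k) : poch (-M) k = 0 :=
  prod_eq_zero (mem_range.2 h) (neg_add_cancel _)

lemma poch_neg_natCast_ne_zero {M : ℕ} (h : k ≤ M) : poch (-M) k ≠ 0 := by
  refine prod_ne_zero_iff.2 fun i hi => ?_
  have : (i : ℝ) < M := by exact_mod_cast (mem_range.1 hi).trans_le h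
  linarith

lemma poch_add_one_eq (ha : a ≠ 0) : poch (a + 1) k = poch a k * (a + k) / a := by
  rw [poch_mul_add, mul_div_cancel_left₀ _ ha]

lemma poch_split {s m : ℕ} (hsk : s ≤ k) (hkm : k ≤ m) (y : ℝ) :
    poch (y - m) (m + 1) =
      poch (y - m) (m - k) * poch (y - k) (k - s) * ((y - s) * poch (y + 1 - s) s) := by
  rw [show m + 1 = (m - k) + ((k - s) + (s + 1)) by omega, poch_add, poch_add, poch_succ',
    Nat.cast_sub hkm, Nat.cast_sub hsk, mul_assoc]
  ring_nf

end Pochhammer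

lemma poch_eq_ascPochhammer_eval (a : ℝ) (k : ℕ) : poch a k = (ascPochhammer ℝ k).eval a := by
  induction k with
  | zero => simp
  | succ k ih => rw [poch_succ, ascPochhammer_succ_eval, ih]

lemma eval_ascPochhammer_comp (k : ℕ) (a x : ℝ) :
    ((ascPochhammer ℝ k).comp (X + C a)).eval x = poch (x + a) k := by
  simp [poch_eq_ascPochhammer_eval]

lemma natDegree_ascPochhammer_comp (k : ℕ) (a : ℝ) :
    ((ascPochhammer ℝ k).comp (X + C a)).natDegree = k := by
  simp [natDegree_comp]

lemma saalschutz_sum_natCast {j k : ℕ} (hj : j ≤ k) :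
    ∑ s ∈ range (k + 1), poch (-(k : ℝ)) s * poch ((k : ℝ) + 1) s / (s ! : ℝ) ^ 2 *
        (poch ((j : ℝ) - k) (k - s) * poch ((j : ℝ) + 1 - s) s) =
      (-1) ^ k * poch ((j : ℝ) + 1) k := by
  rw [sum_eq_single_of_mem j (mem_range.2 (Nat.lt_succ_of_le hj))]
  · have hk := poch_add (-(k : ℝ)) j (k - j)
    rw [Nat.add_sub_cancel' hj, poch_neg_natCast_self, show -(k : ℝ) + j = j - k by ring] at hk
    have hkj := poch_natCast_add_one_mul_factorial j k
    have hjk := poch_natCast_add_one_mul_factorial k j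
    rw [add_comm k j] at hkj
    rw [add_sub_cancel_left, poch_one]
    have : (j ! : ℝ) ≠ 0 := by positivity
    field_simp
    linear_combination (-1) ^ k * hkj - (-1) ^ k * hjk - poch ((k : ℝ) + 1) j * hk
  · intro s hs hsj
    rcases lt_or_gt_of_ne hsj with hlt | hgt
    · rw [show (j : ℝ) - k = -((k - j : ℕ) : ℝ) by rw [Nat.cast_sub hj]; ring,
        poch_neg_natCast_eq_zero (k := k - s) (by omega)]
      ring
    · rw [show (j : ℝ) + 1 - s = -((s - j - 1 : ℕ) : ℝ) by
          rw [Nat.cast_sub (by omega), Nat.cast_sub (by omega)]; push_cast; ring,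
        poch_neg_natCast_eq_zero (k := s) (M := s - j - 1) (by omega)]
      ring

lemma saalschutz_sum (k : ℕ) (y : ℝ) :
    ∑ s ∈ range (k + 1), poch (-(k : ℝ)) s * poch ((k : ℝ) + 1) s / (s ! : ℝ) ^ 2 *
        (poch (y - k) (k - s) * poch (y + 1 - s) s) =
      (-1) ^ k * poch (y + 1) k := by
  let A (n : ℕ) (a : ℝ) : ℝ[X] := (ascPochhammer ℝ n).comp (X + C a)
  let P : ℝ[X] := ∑ s ∈ range (k + 1),
    C (poch (-(k : ℝ)) s * poch ((k : ℝ) + 1) s / (s ! : ℝ) ^ 2) * (A (k - s) (-k) * A s (1 - s))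
  let Q : ℝ[X] := C ((-1) ^ k) * A k 1
  have hP (x : ℝ) : P.eval x = ∑ s ∈ range (k + 1), poch (-(k : ℝ)) s * poch ((k : ℝ) + 1) s /
      (s ! : ℝ) ^ 2 * (poch (x - k) (k - s) * poch (x + 1 - s) s) := by
    simp only [P, A, eval_finsetSum, eval_mul, eval_C, eval_ascPochhammer_comp, ← sub_eq_add_neg,
      add_sub_assoc]
  have hQ (x : ℝ) : Q.eval x = (-1) ^ k * poch (x + 1) k := by
    simp only [Q, A, eval_mul, eval_C, eval_ascPochhammer_comp]
  have hdeg : max P.natDegree Q.natDegree < Fintype.card (Fin (k + 1)) := by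
    rw [Fintype.card_fin]
    refine Nat.lt_succ_of_le (max_le ?_ ?_)
    · refine natDegree_sum_le_of_forall_le _ _ fun s hs => (natDegree_C_mul_le _ _).trans ?_
      refine natDegree_mul_le.trans ?_
      simp only [A, natDegree_ascPochhammer_comp]
      have := mem_range.1 hs
      omega
    · exact (natDegree_C_mul_le _ _).trans (natDegree_ascPochhammer_comp k 1).le
  have hPQ : P = Q := eq_of_natDegree_lt_card_of_eval_eq P Q
    (f := fun j : Fin (k + 1) => ((j : ℕ) : ℝ)) (Nat.cast_injective.comp Fin.val_injective)
    (fun j => by rw [hP, hQ]; exact saalschutz_sum_natCast (Nat.lt_succ_iff.1 j.2)) hdeg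
  rw [← hP, ← hQ, hPQ]

noncomputable def racahWeight (L m n t : ℕ) : ℝ :=
  (-1) ^ t * (poch ((n : ℝ) - L) (m - t) / poch ((n : ℝ) + 2) (m - t))
    * (poch ((L : ℝ) + 2 - t) t / t !) * ((m : ℝ) + n + 1 - 2 * t)

noncomputable def racahCoeff (k m n s : ℕ) : ℝ :=
  poch (-(k : ℝ)) s * poch ((k : ℝ) + 1) s /
    (poch 1 s * poch (-(m : ℝ)) s * poch (-(n : ℝ)) s * s !)

noncomputable def racahTerm (s L m n t : ℕ) : ℝ :=
  racahWeight L m n t * (poch (-(t : ℝ)) s * poch ((t : ℝ) - m - n - 1) s)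

lemma racahTerm_mul_eq_succ_mul {s L m n t : ℕ} (ht : t < m) :
    racahTerm s L m n t * ((L + 1 - t) * (m + n + 1 - t - s) * (m + n - 1 - 2 * t)) =
      racahTerm s L m n (t + 1) * ((t + 1 - s) * (L + t + 1 - m - n) * (m + n + 1 - 2 * t)) := by
  obtain ⟨d, rfl⟩ : ∃ d, m = t + 1 + d := ⟨m - (t + 1), by omega⟩
  simp only [racahTerm, racahWeight, show t + 1 + d - t = d + 1 by omega,
    show t + 1 + d - (t + 1) = d by omega, poch_succ _ d, Nat.factorial_succ]
  push_cast
  have ht1 : -((t : ℝ) + 1) ≠ 0 := neg_ne_zero.2 (by positivity)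
  have hb : (t : ℝ) - (t + 1 + d) - n - 1 ≠ 0 := by linarith [(Nat.cast_nonneg n : (0 : ℝ) ≤ n)]
  rw [show -(t : ℝ) = -((t : ℝ) + 1) + 1 by ring, poch_add_one_eq ht1,
    show (t : ℝ) + 1 - (t + 1 + d) - n - 1 = (t - (t + 1 + d) - n - 1) + 1 by ring,
    poch_add_one_eq hb, show (L : ℝ) + 2 - t = (L + 2 - (t + 1)) + 1 by ring, poch_succ' _ t]
  field_simp
  ring

lemma sum_range_racahTerm_mul {s L m n T : ℕ} (hT : T ≤ m) (hmn : m ≤ n) :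
    (∑ t ∈ range (T + 1), racahTerm s L m n t) * ((L + 1 - s) * (m + n + 1 - 2 * T)) =
      racahTerm s L m n T * ((L + 1 - T) * (m + n + 1 - T - s)) := by
  induction T with
  | zero =>
    have h : racahTerm s L m n 0 * s = 0 := by
      rcases Nat.eq_zero_or_pos s with rfl | hs
      · simp
      · rw [racahTerm, poch_neg_natCast_eq_zero hs]
        ring
    simp only [zero_add, sum_range_one]
    push_cast
    linear_combination ((L : ℝ) - m - n) * h
  | succ T ih =>
    have hc : (m : ℝ) + n + 1 - 2 * T ≠ 0 := by
      have : (T : ℝ) + 1 ≤ m := by exact_mod_cast hT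
      have : (m : ℝ) ≤ n := by exact_mod_cast hmn
      linarith
    refine mul_right_cancel₀ hc ?_
    rw [sum_range_succ]
    push_cast
    linear_combination ((m : ℝ) + n - 1 - 2 * T) * ih (by omega) +
      racahTerm_mul_eq_succ_mul (s := s) (L := L) (m := m) (n := n) (t := T) (by omega)

lemma sum_racahTerm_mul {s L m n : ℕ} (hmn : m ≤ n) :
    (∑ t ∈ range (m + 1), racahTerm s L m n t) * (L + 1 - s) =
      (-1) ^ m * (n + 1) / m ! * poch ((L : ℝ) + 1 - m) (m + 1) *
        (poch (-(m : ℝ)) s * poch (-(n : ℝ)) s) := by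
  have hc : (n : ℝ) + 1 - m ≠ 0 := by
    have : (m : ℝ) ≤ n := by exact_mod_cast hmn
    linarith
  have hlast : racahTerm s L m n m = (-1) ^ m * (poch ((L : ℝ) + 2 - m) m / m !) * (n + 1 - m) *
      (poch (-(m : ℝ)) s * poch (-(n : ℝ) - 1) s) := by
    simp only [racahTerm, racahWeight, Nat.sub_self, poch_zero, div_one]
    ring_nf
  have h := sum_range_racahTerm_mul (s := s) (L := L) le_rfl hmn
  have hn := poch_mul_add (-(n : ℝ) - 1) s
  rw [hlast] at h
  rw [show -(n : ℝ) - 1 + 1 = -n by ring] at hn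
  refine mul_right_cancel₀ hc ?_
  rw [poch_succ', show (L : ℝ) + 1 - m + 1 = L + 2 - m by ring]
  linear_combination h - (-1) ^ m * (poch ((L : ℝ) + 2 - m) m / m !) * (n + 1 - m) *
    poch (-(m : ℝ)) s * (L + 1 - m) * hn

lemma sum_racahWeight_mul_racah (L k m n : ℕ) :
    ∑ t ∈ range (m + 1), racahWeight L m n t * racah k t m n =
      ∑ s ∈ range (k + 1), racahCoeff k m n s * ∑ t ∈ range (m + 1), racahTerm s L m n t := by
  simp only [racah, racahCoeff, racahTerm, mul_sum]
  rw [sum_comm]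
  exact sum_congr rfl fun s _ => sum_congr rfl fun t _ => by ring

lemma racahCoeff_mul_sum_racahTerm {s k L m n : ℕ} (hsk : s ≤ k) (hkm : k ≤ m) (hmn : m ≤ n)
    (hnL : n ≤ L) :
    racahCoeff k m n s * ∑ t ∈ range (m + 1), racahTerm s L m n t =
      (-1) ^ m * (n + 1) / m ! * poch ((L : ℝ) + 1 - m) (m - k) *
        (poch (-(k : ℝ)) s * poch ((k : ℝ) + 1) s / (s ! : ℝ) ^ 2 *
          (poch ((L : ℝ) + 1 - k) (k - s) * poch ((L : ℝ) + 1 + 1 - s) s)) := by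
  have h := sum_racahTerm_mul (s := s) (L := L) hmn
  rw [poch_split hsk hkm] at h
  have hL : (L : ℝ) + 1 - s ≠ 0 := by
    have : (s : ℝ) ≤ L := by exact_mod_cast hsk.trans (hkm.trans (hmn.trans hnL))
    linarith
  have hm := poch_neg_natCast_ne_zero (hsk.trans hkm)
  have hn := poch_neg_natCast_ne_zero (hsk.trans (hkm.trans hmn))
  refine mul_right_cancel₀ hL ?_
  rw [racahCoeff, mul_assoc, h, poch_one]
  field_simp

/-- Here `L = 2ℓ`. -/
theorem racah_sum (L k m n : ℕ) (hkm : k ≤ m) (hmn : m ≤ n) (hnL : n ≤ L) :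
    ∑ t ∈ Finset.range (m+1),
      (-1:ℝ)^t * (poch ((n:ℝ) - L) (m-t) / poch ((n:ℝ)+2) (m-t))
        * (poch ((L:ℝ)+2-t) t / (Nat.factorial t : ℝ))
        * ((m:ℝ)+n+1-2*t) * racah k t m n =
    (-1:ℝ)^(m+k) * ((Nat.factorial (L+k+1) : ℝ) * (Nat.factorial (L-k) : ℝ)
        / (Nat.factorial (L+1) : ℝ))
      * ((n:ℝ)+1) / ((Nat.factorial m : ℝ) * (Nat.factorial (L-m) : ℝ)) := by
  have hmL : m ≤ L := hmn.trans hnL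
  have hlow := poch_natCast_add_one_mul_factorial (m - k) (L - m)
  have hhigh := poch_natCast_add_one_mul_factorial k (L + 1)
  rw [Nat.cast_sub hmL, show L - m + (m - k) = L - k by omega] at hlow
  push_cast at hhigh
  calc _ = ∑ t ∈ range (m + 1), racahWeight L m n t * racah k t m n := rfl
    _ = ∑ s ∈ range (k + 1), (-1) ^ m * (n + 1) / m ! * poch ((L : ℝ) + 1 - m) (m - k) *
          (poch (-(k : ℝ)) s * poch ((k : ℝ) + 1) s / (s ! : ℝ) ^ 2 *
            (poch ((L : ℝ) + 1 - k) (k - s) * poch ((L : ℝ) + 1 + 1 - s) s)) := by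
      rw [sum_racahWeight_mul_racah]
      exact sum_congr rfl fun s hs =>
        racahCoeff_mul_sum_racahTerm (Nat.lt_succ_iff.1 (mem_range.1 hs)) hkm hmn hnL
    _ = (-1) ^ m * (n + 1) / m ! * poch ((L : ℝ) + 1 - m) (m - k) *
          ((-1) ^ k * poch ((L : ℝ) + 1 + 1) k) := by rw [← mul_sum, saalschutz_sum]
    _ = _ := by
      rw [show (L : ℝ) + 1 - m = (L : ℝ) - m + 1 by ring, show L + k + 1 = L + 1 + k by omega]
      field_simp
      linear_combination (-1) ^ m * (-1) ^ k * ((L + 1)! * poch ((L : ℝ) + 1 + 1) k * hlow +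
        (L - k)! * hhigh)
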